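/- arXiv:2604.13678 — 5 statements merged into one kernel-verified Lean document; each statement's English description precedes it below -/
import Mathlib

section
/- Let z₁, z₂ ∈ ℂⁿ with z* w₁, z* w₂ ∈ ℝ (for a fixed nonzero z ∈ ℂⁿ). If z w₁* + w₁ z* = z w₂* + w₂ z*, then w₁ = w₂. -/
open Matrix

/-- Uniqueness of the canonical tangent-space parametrization: if `z ≠ 0`,
`z* w₁, z* w₂ ∈ ℝ` and `z w₁* + w₁ z* = z w₂* + w₂ z*`, then `w₁ = w₂`. -/
theorem stmt2 {n : ℕ} (z w₁ w₂ : Fin n → ℂ) (hz : z ≠ 0)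
    (h1 : (star z ⬝ᵥ w₁).im = 0) (h2 : (star z ⬝ᵥ w₂).im = 0)
    (heq : vecMulVec z (star w₁) + vecMulVec w₁ (star z)
         = vecMulVec z (star w₂) + vecMulVec w₂ (star z)) :
    w₁ = w₂ := by
  classical
  set u : Fin n → ℂ := w₁ - w₂ with hu
  have key : ∀ i j, z i * (starRingEnd ℂ) (u j) + u i * (starRingEnd ℂ) (z j) = 0 := by
    intro i j
    have h := congrFun (congrFun heq i) j
    simp only [Matrix.add_apply, vecMulVec_apply, Pi.star_apply, RCLike.star_def] at h
    simp only [hu, Pi.sub_apply, map_sub]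
    ring_nf
    linear_combination h
  set c : ℂ := ∑ j, (starRingEnd ℂ) (z j) * z j with hcdef
  have hc : c ≠ 0 := by
    have hcr : c = ((∑ j, Complex.normSq (z j) : ℝ) : ℂ) := by
      push_cast
      exact Finset.sum_congr rfl fun j _ => (Complex.normSq_eq_conj_mul_self).symm ▸ rfl
    rw [hcr]
    norm_cast
    obtain ⟨j, hj⟩ : ∃ j, z j ≠ 0 := by
      by_contra h; push_neg at h; exact hz (funext h)
    have : 0 < ∑ j, Complex.normSq (z j) :=
      Finset.sum_pos' (fun j _ => Complex.normSq_nonneg _)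
        ⟨j, Finset.mem_univ j, Complex.normSq_pos.mpr hj⟩
    exact ne_of_gt this
  set r : ℂ := ∑ j, (starRingEnd ℂ) (z j) * u j with hrdef
  have hr_im : r.im = 0 := by
    have : r = star z ⬝ᵥ w₁ - star z ⬝ᵥ w₂ := by
      simp [hrdef, dotProduct, hu, mul_sub, Finset.sum_sub_distrib]
    rw [this, Complex.sub_im, h1, h2, sub_zero]
  have hconj : (starRingEnd ℂ) r = r := Complex.conj_eq_iff_im.mpr hr_im
  have hs : (∑ j, (starRingEnd ℂ) (u j) * z j) = r := by
    rw [← hconj, hrdef, map_sum]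
    exact Finset.sum_congr rfl fun j _ => by simp [mul_comm]
  have main : ∀ i, z i * r + u i * c = 0 := by
    intro i
    have : z i * r + u i * c
        = ∑ j, (z i * (starRingEnd ℂ) (u j) + u i * (starRingEnd ℂ) (z j)) * z j := by
      rw [← hs, hcdef, Finset.mul_sum, Finset.mul_sum, ← Finset.sum_add_distrib]
      exact Finset.sum_congr rfl fun j _ => by ring
    rw [this]
    simp [key]
  have hr0 : r = 0 := by
    have h2cr : c * r + r * c = 0 := by
      have : (∑ i, (starRingEnd ℂ) (z i) * (z i * r + u i * c)) = c * r + r * c := by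
        simp only [mul_add, Finset.sum_add_distrib]
        rw [hcdef, hrdef, Finset.sum_mul, Finset.sum_mul]
        congr 1
        · exact Finset.sum_congr rfl fun i _ => by ring
        · exact Finset.sum_congr rfl fun i _ => by ring
      rw [← this]
      simp [main]
    have : 2 * c * r = 0 := by linear_combination h2cr
    rcases mul_eq_zero.mp this with h | h
    · rcases mul_eq_zero.mp h with h | h
      · norm_num at h
      · exact absurd h hc
    · exact h
  have hu0 : ∀ i, u i = 0 := by
    intro i
    have := main i
    rw [hr0, mul_zero, zero_add] at this
    exact (mul_eq_zero.mp this).resolve_right hc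
  funext i
  have := hu0 i
  simp only [hu, Pi.sub_apply] at this
  exact sub_eq_zero.mp this
end

section
/- Define the weighted bilinear form ⟨A, B⟩_o := ⟨A, B⟩ + tr(A)·tr(B) on n×n Hermitian matrices, where ⟨A,B⟩ = tr(AB). Let u be a unit vector in ℂⁿ and define the operator T(W) := u u* W + W u u* − (3/2) u u* W u u* for Hermitian W. Then for every Hermitian A and every B in the tangent space T_Z = { u w* + w u* : w ∈ ℂⁿ }, one has ⟨T(A), B⟩_o = ⟨A, B⟩. -/
open Matrix

private lemma trace_vvA {n : ℕ} (a b : Fin n → ℂ) :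
    (vecMulVec a b).trace = a ⬝ᵥ b := by
  simp [Matrix.trace, Matrix.diag, Matrix.vecMulVec_apply, dotProduct]

private lemma mul_vv {n : ℕ} (M : Matrix (Fin n) (Fin n) ℂ) (a b : Fin n → ℂ) :
    M * vecMulVec a b = vecMulVec (M *ᵥ a) b := by
  ext i j
  simp [Matrix.mul_apply, Matrix.vecMulVec_apply, Matrix.mulVec, dotProduct,
    Finset.sum_mul, mul_assoc]

private lemma vv_mul {n : ℕ} (M : Matrix (Fin n) (Fin n) ℂ) (a b : Fin n → ℂ) :
    vecMulVec a b * M = vecMulVec a (b ᵥ* M) := by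
  ext i j
  simp [Matrix.mul_apply, Matrix.vecMulVec_apply, Matrix.vecMul, dotProduct,
    Finset.mul_sum, mul_assoc]

private lemma vv_mul_vv {n : ℕ} (a b c d : Fin n → ℂ) :
    vecMulVec a b * vecMulVec c d = (b ⬝ᵥ c) • vecMulVec a d := by
  ext i j
  simp [Matrix.mul_apply, Matrix.vecMulVec_apply, dotProduct, Finset.sum_mul,
    Finset.mul_sum]
  exact Finset.sum_congr rfl fun x _ => by ring

private lemma vv_mulVec {n : ℕ} (a b c : Fin n → ℂ) :
    vecMulVec a b *ᵥ c = (b ⬝ᵥ c) • a := by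
  ext i
  simp [Matrix.mulVec, Matrix.vecMulVec_apply, dotProduct, Finset.sum_mul,
    Finset.mul_sum, mul_assoc, mul_comm, mul_left_comm]

/-- With the weighted form `⟨A,B⟩_o = tr(AB) + tr A · tr B` and
`T(W) = u u* W + W u u* - (3/2) u u* W u u*` for a unit vector `u`,
one has `⟨T(A), B⟩_o = ⟨A, B⟩` for every Hermitian `A` and every `B` in the
tangent space `T_Z = { u w* + w u* }`. -/
theorem stmt3 {n : ℕ} (u : Fin n → ℂ) (hu : star u ⬝ᵥ u = 1)
    (A : Matrix (Fin n) (Fin n) ℂ) (hA : A.IsHermitian) (w : Fin n → ℂ)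
    (U : Matrix (Fin n) (Fin n) ℂ) (hU : U = vecMulVec u (star u))
    (T B : Matrix (Fin n) (Fin n) ℂ)
    (hT : T = U * A + A * U - (3/2 : ℂ) • (U * A * U))
    (hB : B = vecMulVec u (star w) + vecMulVec w (star u)) :
    (T * B).trace + T.trace * B.trace = (A * B).trace := by
  subst hU hT hB
  simp only [Matrix.add_mul, Matrix.mul_add, Matrix.sub_mul, Matrix.smul_mul,
    Matrix.mul_smul, vv_mul, mul_vv, vv_mul_vv, Matrix.trace_add, Matrix.trace_sub,
    Matrix.trace_smul, trace_vvA, smul_eq_mul]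
  have hu' : u ⬝ᵥ star u = 1 := by rw [dotProduct_comm]; exact hu
  simp only [vv_mulVec, smul_dotProduct, smul_eq_mul, hu, hu',
    Matrix.smul_mulVec, mul_one, one_mul, one_smul]
  have hc : u ⬝ᵥ star u ᵥ* A = star u ᵥ* A ⬝ᵥ u := dotProduct_comm _ _
  have h1 : A *ᵥ u ⬝ᵥ star u = star u ᵥ* A ⬝ᵥ u := by
    rw [dotProduct_comm, Matrix.dotProduct_mulVec]
  have h2 : A *ᵥ w ⬝ᵥ star u = star u ᵥ* A ⬝ᵥ w := by
    rw [dotProduct_comm, Matrix.dotProduct_mulVec]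
  have h3 : w ⬝ᵥ star u = star u ⬝ᵥ w := dotProduct_comm _ _
  rw [hc, h1, h2, h3]; ring
end

section
/- Let u be a unit vector in ℂⁿ, let P(W) := u u* W + W u u* − u u* W u u* be the orthogonal projection onto the tangent space T_Z, and let T(W) := u u* W + W u u* − (3/2) u u* W u u*. With the weighted norm ‖W‖_o² := ‖W‖_F² + (tr W)², for every Hermitian matrix A one has: (i) ‖T(A)‖_o ≤ ‖P(A)‖_F, and (ii) ‖P(A)‖_F ≤ ‖P(A)‖_o ≤ √2 · ‖P(A)‖_F. -/
/-!
Write `c = u* A u`, which is real since `A` is Hermitian, and `w = A u - c u ⊥ u`. In an orthonormal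
frame starting with `u`, both `P(A)` and `T(A)` are the block matrix `[[a, w*], [w, 0]]`, with
`a = c` and `a = c / 2` respectively. Such a matrix has trace `a` and `‖·‖_F² = 2‖w‖² + a²`, so
`‖T(A)‖_o² = 2‖w‖² + c²/2`, `‖P(A)‖_F² = 2‖w‖² + c²` and `‖P(A)‖_o² = 2‖w‖² + 2c²`.
-/

open Matrix

/-- Squared Frobenius norm of a complex matrix. -/
def frobSq {n : ℕ} (M : Matrix (Fin n) (Fin n) ℂ) : ℝ :=
  ∑ i, ∑ j, Complex.normSq (M i j)

/-- Squared weighted norm `‖W‖_o² = ‖W‖_F² + (tr W)²` (for Hermitian `W`,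
whose trace is real). -/
noncomputable def normOSq {n : ℕ} (M : Matrix (Fin n) (Fin n) ℂ) : ℝ :=
  frobSq M + (M.trace.re) ^ 2

lemma frobSq_eq_re_trace {n : ℕ} (M : Matrix (Fin n) (Fin n) ℂ) :
    frobSq M = (trace (Mᴴ * M)).re := by
  simp only [trace, diag, mul_apply, conjTranspose_apply, Complex.re_sum]
  rw [Finset.sum_comm]
  simp [frobSq, Complex.normSq_apply, Complex.mul_re]

open scoped ComplexOrder in
lemma re_star_dotProduct_self_nonneg {n : ℕ} (v : Fin n → ℂ) : 0 ≤ (star v ⬝ᵥ v).re :=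
  (Complex.nonneg_iff.mp (dotProduct_star_self_nonneg v)).1

lemma star_dotProduct_eq_zero_symm {n : ℕ} {v w : Fin n → ℂ} (h : star v ⬝ᵥ w = 0) :
    star w ⬝ᵥ v = 0 := by
  rw [star_dotProduct, h, star_zero]

section TangentForm

variable {n : ℕ}

/-- For `w ⊥ u`, this is `[[a, w*], [w, 0]]` in an orthonormal frame starting with `u`. -/
def tangentForm (u w : Fin n → ℂ) (a : ℝ) : Matrix (Fin n) (Fin n) ℂ :=
  vecMulVec u (star w) + vecMulVec w (star u) + (a : ℂ) • vecMulVec u (star u)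

lemma conjTranspose_tangentForm (u w : Fin n → ℂ) (a : ℝ) :
    (tangentForm u w a)ᴴ = tangentForm u w a := by
  simp only [tangentForm, conjTranspose_add, conjTranspose_smul, conjTranspose_vecMulVec,
    star_star, Complex.star_def, Complex.conj_ofReal]
  abel

lemma mul_add_mul_sub_smul_eq_tangentForm {u : Fin n → ℂ} {A : Matrix (Fin n) (Fin n) ℂ}
    (hA : A.IsHermitian) {c : ℝ} (hc : star u ⬝ᵥ A *ᵥ u = c) (μ : ℝ) :
    vecMulVec u (star u) * A + A * vecMulVec u (star u)
        - (μ : ℂ) • (vecMulVec u (star u) * A * vecMulVec u (star u)) =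
      tangentForm u (A *ᵥ u - (c : ℂ) • u) ((2 - μ) * c) := by
  have hstar : star (A *ᵥ u) = star u ᵥ* A := by rw [star_mulVec, hA.eq]
  have hcr : star (c : ℂ) = c := Complex.conj_ofReal c
  rw [vecMulVec_mul, mul_vecMulVec, vecMulVec_mul_vecMulVec, ← hstar, star_dotProduct, hc, hcr]
  simp only [tangentForm, star_sub, star_smul, hcr, vecMulVec_sub, sub_vecMulVec, vecMulVec_smul,
    smul_vecMulVec]
  push_cast
  module

variable {u w : Fin n → ℂ} (hu : star u ⬝ᵥ u = 1) (huw : star u ⬝ᵥ w = 0)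
include hu huw

lemma trace_tangentForm (a : ℝ) : trace (tangentForm u w a) = a := by
  simp [tangentForm, dotProduct_comm u, dotProduct_comm w, hu, huw,
    star_dotProduct_eq_zero_symm huw]

lemma frobSq_tangentForm (a : ℝ) :
    frobSq (tangentForm u w a) = 2 * (star w ⬝ᵥ w).re + a ^ 2 := by
  rw [frobSq_eq_re_trace, conjTranspose_tangentForm]
  simp only [tangentForm, add_mul, mul_add, smul_mul_assoc, mul_smul_comm,
    vecMulVec_mul_vecMulVec, trace_add, trace_smul, trace_vecMulVec, hu, huw,
    star_dotProduct_eq_zero_symm huw, dotProduct_comm u, dotProduct_comm w, zero_smul, one_smul,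
    smul_eq_mul, smul_dotProduct, zero_dotProduct, mul_zero, mul_one, add_zero, zero_add,
    Complex.add_re, Complex.mul_re, Complex.ofReal_re, Complex.ofReal_im]
  ring

lemma normOSq_tangentForm (a : ℝ) :
    normOSq (tangentForm u w a) = 2 * (star w ⬝ᵥ w).re + 2 * a ^ 2 := by
  rw [normOSq, frobSq_tangentForm hu huw, trace_tangentForm hu huw, Complex.ofReal_re]
  ring

end TangentForm

/-- For a unit vector `u`, the orthogonal projection
`P(W) = u u* W + W u u* - u u* W u u*` and the weighted projection
`T(W) = u u* W + W u u* - (3/2) u u* W u u*` satisfy, for every Hermitian `A`: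
`‖T(A)‖_o ≤ ‖P(A)‖_F` and `‖P(A)‖_F ≤ ‖P(A)‖_o ≤ √2 ‖P(A)‖_F`. -/
theorem stmt4 {n : ℕ} (u : Fin n → ℂ) (hu : star u ⬝ᵥ u = 1)
    (A : Matrix (Fin n) (Fin n) ℂ) (hA : A.IsHermitian)
    (U P T : Matrix (Fin n) (Fin n) ℂ)
    (hU : U = vecMulVec u (star u))
    (hP : P = U * A + A * U - U * A * U)
    (hT : T = U * A + A * U - (3/2 : ℂ) • (U * A * U)) :
    Real.sqrt (normOSq T) ≤ Real.sqrt (frobSq P) ∧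
    Real.sqrt (frobSq P) ≤ Real.sqrt (normOSq P) ∧
    Real.sqrt (normOSq P) ≤ Real.sqrt 2 * Real.sqrt (frobSq P) := by
  subst hU
  set c := (star u ⬝ᵥ A *ᵥ u).re
  have hc : star u ⬝ᵥ A *ᵥ u = c :=
    Complex.ext rfl (by simpa using hA.im_star_dotProduct_mulVec_self u)
  set w := A *ᵥ u - (c : ℂ) • u
  have huw : star u ⬝ᵥ w = 0 := by simp [w, dotProduct_sub, hc, hu]
  have hP' : P = tangentForm u w c := by
    rw [hP]
    convert mul_add_mul_sub_smul_eq_tangentForm hA hc 1 using 2 <;> norm_num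
  have hT' : T = tangentForm u w (c / 2) := by
    rw [hT]
    convert mul_add_mul_sub_smul_eq_tangentForm hA hc (3 / 2) using 2
    · norm_num
    · ring
  have hw := re_star_dotProduct_self_nonneg w
  rw [hP', hT', frobSq_tangentForm hu huw, normOSq_tangentForm hu huw, normOSq_tangentForm hu huw,
    ← Real.sqrt_mul zero_le_two]
  refine ⟨?_, ?_, ?_⟩ <;> apply Real.sqrt_le_sqrt <;> nlinarith [sq_nonneg c]
end

section
/- Let c₁,…,c_m ∈ ℂ, a₁,…,a_m ∈ ℂⁿ, and σ₁,…,σ_m ∈ {0,1}. Then the operator norm of (1/m)∑_k c_k σ_k a_k a_k^T is at most (max_k |c_k|) times the operator norm of (1/m)∑_k σ_k a_k a_k*. -/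
open Matrix

/-- Spectral (operator) norm of a complex square matrix. -/
noncomputable def opNorm {n : ℕ} (M : Matrix (Fin n) (Fin n) ℂ) : ℝ :=
  ‖Matrix.toEuclideanCLM (𝕜 := ℂ) M‖

open scoped Matrix.Norms.L2Operator

private lemma l2_norm_map_star_le {p q : ℕ} (M : Matrix (Fin p) (Fin q) ℂ) :
    ‖M.map star‖ ≤ ‖M‖ := by
  rw [Matrix.l2_opNorm_def]
  refine ContinuousLinearMap.opNorm_le_bound _ (norm_nonneg M) fun x => ?_
  set x' : EuclideanSpace ℂ (Fin q) := (WithLp.equiv 2 (Fin q → ℂ)).symm (fun k => star (x k)) with hx'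
  have hxx : ‖x'‖ = ‖x‖ := by
    simp [EuclideanSpace.norm_eq, hx']
  have h1 : ‖(LinearEquiv.trans Matrix.toEuclideanLin LinearMap.toContinuousLinearMap)
      (M.map star) x‖ = ‖Matrix.toEuclideanLin M x'‖ := by
    simp only [LinearEquiv.trans_apply, LinearMap.coe_toContinuousLinearMap']
    simp only [EuclideanSpace.norm_eq]
    congr 1
    refine Finset.sum_congr rfl fun i _ => ?_
    have h2 : (Matrix.toEuclideanLin (M.map star) x) i
        = star ((Matrix.toEuclideanLin M x') i) := by
      show ((M.map star) *ᵥ (fun k => x k)) i = star ((M *ᵥ (fun k => star (x k))) i)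
      simp [Matrix.mulVec, dotProduct, ← map_sum (starRingEnd ℂ)]
    rw [h2, norm_star]
  rw [h1, ← hxx]
  have := Matrix.l2_opNorm_mulVec M x'
  simpa [Matrix.toEuclideanLin_apply] using this

private lemma l2_norm_map_star {p q : ℕ} (M : Matrix (Fin p) (Fin q) ℂ) :
    ‖M.map star‖ = ‖M‖ := by
  refine le_antisymm (l2_norm_map_star_le M) ?_
  have := l2_norm_map_star_le (M.map star)
  rwa [show (M.map star).map star = M by ext i j; simp] at this

private lemma l2_norm_diagonal_le {q : ℕ} (c : Fin q → ℂ) {C : ℝ} (hC0 : 0 ≤ C)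
    (hC : ∀ k, ‖c k‖ ≤ C) : ‖(Matrix.diagonal c : Matrix (Fin q) (Fin q) ℂ)‖ ≤ C := by
  rw [Matrix.l2_opNorm_def]
  refine ContinuousLinearMap.opNorm_le_bound _ hC0 fun x => ?_
  have h1 : ‖(LinearEquiv.trans Matrix.toEuclideanLin LinearMap.toContinuousLinearMap)
      (Matrix.diagonal c) x‖ = Real.sqrt (∑ i, ‖c i * x i‖ ^ 2) := by
    simp only [LinearEquiv.trans_apply, LinearMap.coe_toContinuousLinearMap']
    rw [EuclideanSpace.norm_eq]
    congr 1
    refine Finset.sum_congr rfl fun i _ => ?_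
    have h2 : (Matrix.toEuclideanLin (Matrix.diagonal c) x) i = c i * x i := by
      show ((Matrix.diagonal c) *ᵥ (fun k => x k)) i = c i * x i
      simp [Matrix.mulVec_diagonal]
    rw [h2]
  rw [h1, EuclideanSpace.norm_eq, ← Real.sqrt_sq hC0, ← Real.sqrt_mul (sq_nonneg C)]
  refine Real.sqrt_le_sqrt ?_
  rw [Finset.mul_sum]
  refine Finset.sum_le_sum fun i _ => ?_
  rw [norm_mul, mul_pow]
  have := hC i
  have h2 : ‖c i‖ ^ 2 ≤ C ^ 2 := by nlinarith [norm_nonneg (c i)]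
  nlinarith [sq_nonneg ‖x i‖, norm_nonneg (x i)]

/-- For scalars `c_k`, vectors `a_k`, and indicators `σ_k ∈ {0,1}`,
`‖(1/m) ∑ c_k σ_k a_k a_kᵀ‖ ≤ (max_k |c_k|) ‖(1/m) ∑ σ_k a_k a_k*‖`. -/
theorem stmt10 {n m : ℕ} (c : Fin m → ℂ) (a : Fin m → Fin n → ℂ)
    (σ : Fin m → ℝ) (hσ : ∀ k, σ k = 0 ∨ σ k = 1) :
    opNorm ((m : ℝ)⁻¹ • ∑ k, σ k • (c k • vecMulVec (a k) (a k)))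
      ≤ (⨆ k, ‖c k‖) *
        opNorm ((m : ℝ)⁻¹ • ∑ k, σ k • vecMulVec (a k) (star (a k))) := by
  classical
  have hop : ∀ M : Matrix (Fin n) (Fin n) ℂ, opNorm M = ‖M‖ :=
    fun M => (Matrix.cstar_norm_def M).symm
  rcases Nat.eq_zero_or_pos m with hm | hm
  · subst hm
    have e1 : (∑ k : Fin 0, σ k • (c k • vecMulVec (a k) (a k))) = 0 := by simp
    have e2 : (∑ k : Fin 0, σ k • vecMulVec (a k) (star (a k))) = 0 := by simp
    rw [e1, e2, smul_zero]
    have e3 : opNorm (0 : Matrix (Fin n) (Fin n) ℂ) = 0 := by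
      rw [opNorm, map_zero, norm_zero]
    rw [e3, mul_zero]
  set C := ⨆ k, ‖c k‖ with hCdef
  have hC : ∀ k, ‖c k‖ ≤ C := by
    intro k
    rw [hCdef]
    exact le_ciSup (Set.Finite.bddAbove (Set.finite_range fun k => ‖c k‖)) k
  have hC0 : 0 ≤ C := le_trans (norm_nonneg (c ⟨0, hm⟩)) (hC _)
  set A : Matrix (Fin n) (Fin m) ℂ := Matrix.of fun i k => (σ k : ℂ) * a k i with hA
  have hM : (∑ k, σ k • (c k • vecMulVec (a k) (a k))) = A * Matrix.diagonal c * Aᵀ := by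
    ext i j
    rw [Matrix.mul_apply]
    simp only [Matrix.sum_apply, Matrix.smul_apply, Matrix.vecMulVec_apply,
      Matrix.mul_diagonal, Matrix.transpose_apply, hA, Matrix.of_apply]
    refine Finset.sum_congr rfl fun k _ => ?_
    rcases hσ k with h | h <;> simp [h] <;> ring
  have hN : (∑ k, σ k • vecMulVec (a k) (star (a k))) = A * Aᴴ := by
    ext i j
    rw [Matrix.mul_apply]
    simp only [Matrix.sum_apply, Matrix.smul_apply, Matrix.vecMulVec_apply,
      Matrix.conjTranspose_apply, hA, Matrix.of_apply, Pi.star_apply]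
    refine Finset.sum_congr rfl fun k _ => ?_
    rcases hσ k with h | h <;> simp [h] <;> ring
  have hsmul : ∀ M : Matrix (Fin n) (Fin n) ℂ, ‖(m : ℝ)⁻¹ • M‖ = (m : ℝ)⁻¹ * ‖M‖ := by
    intro M
    have h3 : (m : ℝ)⁻¹ • M = (((m : ℝ)⁻¹ : ℝ) : ℂ) • M := by
      ext i j; simp [Complex.real_smul]
    have hinv : (0:ℝ) ≤ (m : ℝ)⁻¹ := by positivity
    rw [h3, norm_smul, Complex.norm_real, Real.norm_eq_abs, abs_of_nonneg hinv]
  have hnT : ‖Aᵀ‖ = ‖A‖ := by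
    have hT : Aᵀ = (A.map star)ᴴ := by
      ext i j; simp [Matrix.conjTranspose_apply, Matrix.map_apply]
    rw [hT, Matrix.l2_opNorm_conjTranspose, l2_norm_map_star]
  have hAA : ‖A * Aᴴ‖ = ‖A‖ * ‖A‖ := by
    have := Matrix.l2_opNorm_conjTranspose_mul_self Aᴴ
    rwa [Matrix.conjTranspose_conjTranspose, Matrix.l2_opNorm_conjTranspose] at this
  have hminv : (0:ℝ) ≤ (m : ℝ)⁻¹ := inv_nonneg.mpr (Nat.cast_nonneg m)
  rw [hop, hop, hM, hN, hsmul, hsmul, hAA]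
  calc (m : ℝ)⁻¹ * ‖A * Matrix.diagonal c * Aᵀ‖
      ≤ (m : ℝ)⁻¹ * (‖A * Matrix.diagonal c‖ * ‖Aᵀ‖) :=
        mul_le_mul_of_nonneg_left (Matrix.l2_opNorm_mul _ _) hminv
    _ ≤ (m : ℝ)⁻¹ * ((‖A‖ * C) * ‖A‖) := by
        rw [hnT]
        refine mul_le_mul_of_nonneg_left (mul_le_mul_of_nonneg_right ?_ (norm_nonneg A)) hminv
        exact le_trans (Matrix.l2_opNorm_mul _ _)
          (mul_le_mul_of_nonneg_left (l2_norm_diagonal_le c hC0 hC) (norm_nonneg A))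
    _ = C * ((m : ℝ)⁻¹ * (‖A‖ * ‖A‖)) := by ring
end

section
/- Let F: ℍ^{n×n} → ℝ be differentiable, Z = β u u* with ‖u‖₂ = 1, β ∈ ℝ\{0}, and let ⟨A,B⟩_o = ⟨A,B⟩ + tr(A)tr(B). Define T(W) = u u* W + W u u* − (3/2) u u* W u u*. Then for every tangent vector V ∈ T_Z, ⟨V, ∇F(Z)⟩ = ⟨V, T(∇F(Z))⟩_o; i.e., the Riemannian gradient of F at Z with respect to the weighted metric ⟨·,·⟩_o is T(∇F(Z)). -/
open Matrix

private lemma vmv_mul {n : ℕ} (x y : Fin n → ℂ) (M : Matrix (Fin n) (Fin n) ℂ) :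
    vecMulVec x y * M = vecMulVec x (y ᵥ* M) := by
  ext i j
  simp [mul_apply, vecMulVec_apply, vecMul, dotProduct, Finset.mul_sum, mul_assoc]

private lemma mul_vmv {n : ℕ} (x y : Fin n → ℂ) (M : Matrix (Fin n) (Fin n) ℂ) :
    M * vecMulVec x y = vecMulVec (M *ᵥ x) y := by
  ext i j
  simp [mul_apply, vecMulVec_apply, mulVec, dotProduct, Finset.sum_mul, mul_assoc]

private lemma trace_vmv {n : ℕ} (x y : Fin n → ℂ) : (vecMulVec x y).trace = x ⬝ᵥ y := by
  simp [Matrix.trace, Matrix.diag, vecMulVec_apply, dotProduct]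

private lemma vecMul_vmv {n : ℕ} (y a b : Fin n → ℂ) :
    y ᵥ* vecMulVec a b = (y ⬝ᵥ a) • b := by
  ext j
  simp [vecMul, vecMulVec_apply, dotProduct, Finset.sum_mul, mul_assoc]

private lemma vmv_smul {n : ℕ} (x : Fin n → ℂ) (c : ℂ) (b : Fin n → ℂ) :
    vecMulVec x (c • b) = c • vecMulVec x b := by
  ext i j; simp [vecMulVec_apply]; ring

private lemma ttv {n : ℕ} (x y a b : Fin n → ℂ) :
    (vecMulVec x y * vecMulVec a b).trace = (y ⬝ᵥ a) * (b ⬝ᵥ x) := by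
  rw [vmv_mul, vecMul_vmv, vmv_smul, trace_smul, trace_vmv]
  simp [dotProduct_comm b x, smul_eq_mul]

/-- Let `F` be a differentiable real-valued function on Hermitian matrices with
Euclidean gradient `G = ∇F(Z)` at `Z = β u u*` (`‖u‖ = 1`, `β ≠ 0`), meaning
that along any Hermitian direction `V` the derivative of `s ↦ F(Z + sV)` at `0`
is `⟨V, G⟩ = Re tr(VG)`.  With the weighted inner product
`⟨A,B⟩_o = Re tr(AB) + tr A · tr B` and
`T(W) = u u* W + W u u* − (3/2) u u* W u u*`, every tangent vector
`V = u w* + w u*` satisfies `⟨V, G⟩ = ⟨V, T(G)⟩_o`; hence the Riemannian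
gradient of `F` at `Z` w.r.t. `⟨·,·⟩_o` is `T(G)`. -/
theorem stmt18 {n : ℕ} (F : Matrix (Fin n) (Fin n) ℂ → ℝ)
    (u : Fin n → ℂ) (hu : star u ⬝ᵥ u = 1) (β : ℝ) (hβ : β ≠ 0)
    (Z G U TG : Matrix (Fin n) (Fin n) ℂ)
    (hZ : Z = (β : ℂ) • vecMulVec u (star u))
    (hU : U = vecMulVec u (star u))
    (hTG : TG = U * G + G * U - (3 / 2 : ℂ) • (U * G * U))
    (hG : G.IsHermitian)
    (hgrad : ∀ V : Matrix (Fin n) (Fin n) ℂ, V.IsHermitian →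
      HasDerivAt (fun s : ℝ => F (Z + (s : ℂ) • V)) (((V * G).trace).re) 0) :
    ∀ (w : Fin n → ℂ) (V : Matrix (Fin n) (Fin n) ℂ),
      V = vecMulVec u (star w) + vecMulVec w (star u) →
      ((V * G).trace).re
        = ((V * TG).trace).re + (V.trace).re * (TG.trace).re := by
  intro w V hV
  subst hTG hU hV
  set c : ℂ := (star u ᵥ* G) ⬝ᵥ u with hc
  set d : ℂ := (star w ᵥ* G) ⬝ᵥ u with hd
  set e : ℂ := (star u ᵥ* G) ⬝ᵥ w with he
  set p : ℂ := star w ⬝ᵥ u with hp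
  set q : ℂ := star u ⬝ᵥ w with hq
  -- conjugation facts
  have hpq : (starRingEnd ℂ) p = q := by
    rw [hp, hq, ← Complex.star_def, ← star_dotProduct_star, star_star]
  have hcreal : (starRingEnd ℂ) c = c := by
    have h1 : c = star u ⬝ᵥ (G *ᵥ u) := (dotProduct_mulVec _ _ _).symm
    rw [h1, ← Complex.star_def, ← star_dotProduct_star, star_star, star_mulVec, hG.eq]
    exact (dotProduct_mulVec _ _ _).symm
  -- matrix products
  have hUG : vecMulVec u (star u) * G = vecMulVec u (star u ᵥ* G) := vmv_mul _ _ _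
  have hGU : G * vecMulVec u (star u) = vecMulVec (G *ᵥ u) (star u) := mul_vmv _ _ _
  have hUGU : vecMulVec u (star u) * G * vecMulVec u (star u)
      = c • vecMulVec u (star u) := by
    rw [hUG, vmv_mul, vecMul_vmv, vmv_smul, ← hc]
  -- trace computations
  have hmv : ∀ x : Fin n → ℂ, star x ⬝ᵥ (G *ᵥ u) = (star x ᵥ* G) ⬝ᵥ u := fun x =>
    dotProduct_mulVec _ _ _
  have hVG : (((vecMulVec u (star w) + vecMulVec w (star u)) * G).trace) = d + e := by
    rw [add_mul, trace_add, vmv_mul, vmv_mul, trace_vmv, trace_vmv,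
      dotProduct_comm, dotProduct_comm w, hd, he]
  have hVU : (((vecMulVec u (star w) + vecMulVec w (star u)) *
      vecMulVec u (star u)).trace) = p + q := by
    rw [add_mul, trace_add, ttv, ttv, hu, ← hq]
    ring
  have hVUG : (((vecMulVec u (star w) + vecMulVec w (star u)) *
      (vecMulVec u (star u) * G)).trace) = p * c + e := by
    rw [hUG, add_mul, trace_add, ttv, ttv, hu, ← hp, ← hc, ← he]
    ring
  have hVGU : (((vecMulVec u (star w) + vecMulVec w (star u)) *
      (G * vecMulVec u (star u))).trace) = d + c * q := by
    rw [hGU, add_mul, trace_add, ttv, ttv, hu, hmv, hmv, ← hd, ← hc, ← hq]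
    ring
  have htrV : ((vecMulVec u (star w) + vecMulVec w (star u)).trace) = p + q := by
    rw [trace_add, trace_vmv, trace_vmv, dotProduct_comm, dotProduct_comm w, hp, hq]
  have htrTG : ((vecMulVec u (star u) * G + G * vecMulVec u (star u) -
      (3 / 2 : ℂ) • (vecMulVec u (star u) * G * vecMulVec u (star u))).trace)
      = (1 / 2 : ℂ) * c := by
    rw [trace_sub, trace_add, trace_smul, hUGU, trace_smul, hUG, hGU,
      trace_vmv, trace_vmv, trace_vmv, dotProduct_comm u (star u ᵥ* G), ← hc,
      dotProduct_comm (G *ᵥ u) (star u), hmv, ← hc,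
      dotProduct_comm u (star u), hu]
    simp [smul_eq_mul]
    ring
  have hVTG : (((vecMulVec u (star w) + vecMulVec w (star u)) *
      (vecMulVec u (star u) * G + G * vecMulVec u (star u) -
        (3 / 2 : ℂ) • (vecMulVec u (star u) * G * vecMulVec u (star u)))).trace)
      = d + e - (1 / 2 : ℂ) * (c * (p + q)) := by
    rw [mul_sub, mul_add, trace_sub, trace_add, hVUG, hVGU, hUGU, mul_smul_comm,
      trace_smul, mul_smul_comm, trace_smul, hVU]
    simp only [smul_eq_mul]
    ring
  rw [hVG, hVTG, htrV, htrTG]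
  -- scalar real-part arithmetic
  have hcim : c.im = 0 := by
    have h := congrArg Complex.im hcreal
    simp [Complex.conj_im] at h
    linarith
  have hpre : p.re = q.re := by
    have := congrArg Complex.re hpq; simpa using this
  have hpim : p.im = -q.im := by
    have h := congrArg Complex.im hpq
    simp [Complex.conj_im] at h
    linarith
  simp only [Complex.add_re, Complex.sub_re, Complex.mul_re, Complex.mul_im,
    Complex.add_im]
  norm_num [hcim, hpre, hpim]
  ring
end
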